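/- arXiv:2509.21077 — 8 statements merged into one kernel-verified Lean document; each statement's English description precedes it below -/
import Mathlib

section
/- Suppose the KKT conditions of the SQP quadratic-programming subproblem hold, the matrix B is positive definite, and the penalty parameters satisfy ρ_j ≥ |λ_j| for every j and v_j ≥ μ_j for every j. Then the directional-derivative value of the ℓ1 merit function along d is nonpositive: c ⬝ᵥ d − ∑_j ρ_j·|h_j| − ∑_j v_j·max(0, −g_j) ≤ 0. -/
/-!
Stationarity, linearized feasibility and complementarity turn `c ⬝ᵥ d` into
`-(d ⬝ᵥ B d) + λ ⬝ᵥ h - μ ⬝ᵥ g`. The curvature term is nonpositive since `B` is positive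
definite, and the two multiplier terms are dominated termwise by the penalty terms because
`|λ j| ≤ ρ j` and `0 ≤ μ j ≤ v j`.
-/

open Matrix

section

variable {R m k l : Type*} [Fintype m] [Fintype k] [Fintype l]

theorem gradient_dotProduct_eq_of_kkt [CommRing R] {d c : m → R} {B : Matrix m m R}
    {Ah : Matrix k m R} {Ag : Matrix l m R} {h lam : k → R} {g mu : l → R}
    (hstat : B *ᵥ d + c + Ahᵀ *ᵥ lam - Agᵀ *ᵥ mu = 0) (hfeas : Ah *ᵥ d + h = 0)
    (hcomp : mu ⬝ᵥ (Ag *ᵥ d + g) = 0) :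
    c ⬝ᵥ d = -(d ⬝ᵥ B *ᵥ d) + lam ⬝ᵥ h - mu ⬝ᵥ g := by
  have hc : c = Agᵀ *ᵥ mu - Ahᵀ *ᵥ lam - B *ᵥ d := by
    rw [← sub_eq_zero, ← hstat]; abel
  have hAh : Ah *ᵥ d = -h := eq_neg_of_add_eq_zero_left hfeas
  have hAg : mu ⬝ᵥ Ag *ᵥ d = -(mu ⬝ᵥ g) := by
    rw [dotProduct_add] at hcomp; exact eq_neg_of_add_eq_zero_left hcomp
  rw [hc, sub_dotProduct, sub_dotProduct, mulVec_transpose, mulVec_transpose,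
    ← dotProduct_mulVec, ← dotProduct_mulVec, hAh, hAg, dotProduct_neg, dotProduct_comm _ d]
  ring

variable [CommRing R] [LinearOrder R] [IsStrictOrderedRing R]

theorem dotProduct_le_sum_mul_abs {lam ρ h : k → R} (hρ : ∀ j, |lam j| ≤ ρ j) :
    lam ⬝ᵥ h ≤ ∑ j, ρ j * |h j| :=
  Finset.sum_le_sum fun j _ =>
    calc lam j * h j ≤ |lam j| * |h j| := (le_abs_self _).trans (abs_mul _ _).le
      _ ≤ ρ j * |h j| := mul_le_mul_of_nonneg_right (hρ j) (abs_nonneg _)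

theorem neg_dotProduct_le_sum_mul_max {mu v g : l → R} (hmu : ∀ j, 0 ≤ mu j)
    (hv : ∀ j, mu j ≤ v j) : -(mu ⬝ᵥ g) ≤ ∑ j, v j * max 0 (-g j) := by
  rw [dotProduct, ← Finset.sum_neg_distrib]
  refine Finset.sum_le_sum fun j _ => ?_
  calc -(mu j * g j) = mu j * -g j := (mul_neg _ _).symm
    _ ≤ mu j * max 0 (-g j) := mul_le_mul_of_nonneg_left (le_max_right _ _) (hmu j)
    _ ≤ v j * max 0 (-g j) := mul_le_mul_of_nonneg_right (hv j) (le_max_left _ _)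

end

theorem sqp_merit_directional_derivative_nonpos_general
    {n p q : ℕ} (d : Fin n → ℝ) (B : Matrix (Fin n) (Fin n) ℝ)
    (c : Fin n → ℝ) (Ah : Matrix (Fin p) (Fin n) ℝ) (Ag : Matrix (Fin q) (Fin n) ℝ)
    (h : Fin p → ℝ) (g : Fin q → ℝ) (lam : Fin p → ℝ) (mu : Fin q → ℝ)
    (ρ : Fin p → ℝ) (v : Fin q → ℝ)
    (hstat : B.mulVec d + c + Ah.transpose.mulVec lam - Ag.transpose.mulVec mu = 0)
    (hfeas : Ah.mulVec d + h = 0)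
    (hdual : ∀ j, mu j ≥ 0)
    (hcomp : mu ⬝ᵥ (Ag.mulVec d + g) = 0)
    (hB : B.PosDef)
    (hρ : ∀ j, ρ j ≥ |lam j|) (hv : ∀ j, v j ≥ mu j) :
    c ⬝ᵥ d - (∑ j, ρ j * |h j|) - (∑ j, v j * max 0 (-(g j))) ≤ 0 := by
  have hcd := gradient_dotProduct_eq_of_kkt hstat hfeas hcomp
  have hcurv : 0 ≤ d ⬝ᵥ B *ᵥ d := by simpa using hB.posSemidef.dotProduct_mulVec_nonneg d
  have hlam := dotProduct_le_sum_mul_abs (h := h) hρ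
  have hmu := neg_dotProduct_le_sum_mul_max (g := g) hdual hv
  linarith

/-- If the KKT conditions of the SQP QP subproblem hold, `B` is positive definite,
and the penalty parameters dominate the multipliers (`ρ j ≥ |λ j|`, `v j ≥ μ j`),
then the directional derivative of the ℓ1 merit function along `d` is nonpositive. -/
theorem sqp_merit_directional_derivative_nonpos
    {n p q : ℕ} (d : Fin n → ℝ) (B : Matrix (Fin n) (Fin n) ℝ)
    (c : Fin n → ℝ) (Ah : Matrix (Fin p) (Fin n) ℝ) (Ag : Matrix (Fin q) (Fin n) ℝ)
    (h : Fin p → ℝ) (g : Fin q → ℝ) (lam : Fin p → ℝ) (mu : Fin q → ℝ)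
    (ρ : Fin p → ℝ) (v : Fin q → ℝ)
    (hstat : B.mulVec d + c + Ah.transpose.mulVec lam - Ag.transpose.mulVec mu = 0)
    (hfeas : Ah.mulVec d + h = 0)
    (gfeas : ∀ j, (Ag.mulVec d + g) j ≥ 0)
    (hdual : ∀ j, mu j ≥ 0)
    (hcomp : mu ⬝ᵥ (Ag.mulVec d + g) = 0)
    (hB : B.PosDef)
    (hρ : ∀ j, ρ j ≥ |lam j|) (hv : ∀ j, v j ≥ mu j) :
    c ⬝ᵥ d - (∑ j, ρ j * |h j|) - (∑ j, v j * max 0 (-(g j))) ≤ 0 :=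
  sqp_merit_directional_derivative_nonpos_general d B c Ah Ag h g lam mu ρ v hstat hfeas hdual hcomp
    hB hρ hv
end

section
/- Suppose the KKT conditions of the SQP quadratic-programming subproblem hold, the matrix B is positive definite, and the penalty parameters satisfy ρ_j ≥ |λ_j| for every j and v_j ≥ μ_j for every j. Then the directional-derivative value of the ℓ1 merit function along d satisfies the sharper bound c ⬝ᵥ d − ∑_j ρ_j·|h_j| − ∑_j v_j·max(0, −g_j) ≤ −(d ⬝ᵥ B.mulVec d); in particular it is strictly negative whenever d ≠ 0. -/
/-! Dotting the stationarity condition with `d` and using linearized feasibility and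
complementarity gives `c ⬝ᵥ d = -(d ⬝ᵥ B *ᵥ d) + λ ⬝ᵥ h - μ ⬝ᵥ g`; penalty dominance bounds
`λ ⬝ᵥ h` and `-(μ ⬝ᵥ g)` by the two penalty sums of the merit function. -/

open Matrix

section KKT

variable {R m n o : Type*} [CommRing R] [Fintype m] [Fintype n] [Fintype o]

theorem dotProduct_eq_of_qp_kkt (d c : n → R) (B : Matrix n n R) (Ah : Matrix m n R)
    (Ag : Matrix o n R) (h lam : m → R) (g mu : o → R)
    (hstat : B *ᵥ d + c + Ahᵀ *ᵥ lam - Agᵀ *ᵥ mu = 0) (hfeas : Ah *ᵥ d + h = 0)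
    (hcomp : mu ⬝ᵥ (Ag *ᵥ d + g) = 0) :
    c ⬝ᵥ d = -(d ⬝ᵥ B *ᵥ d) + lam ⬝ᵥ h - mu ⬝ᵥ g := by
  have hstat_d : d ⬝ᵥ (B *ᵥ d + c + Ahᵀ *ᵥ lam - Agᵀ *ᵥ mu) = 0 := by
    rw [hstat, dotProduct_zero]
  rw [dotProduct_sub, dotProduct_add, dotProduct_add, dotProduct_transpose_mulVec,
    dotProduct_transpose_mulVec, eq_neg_of_add_eq_zero_left hfeas, dotProduct_neg,
    dotProduct_comm d c] at hstat_d
  rw [dotProduct_add] at hcomp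
  linear_combination hstat_d + hcomp

end KKT

section PenaltyBounds

variable {R ι : Type*} [Ring R] [LinearOrder R] [IsStrictOrderedRing R]

theorem mul_le_mul_abs_of_abs_le {a r : R} (x : R) (h : |a| ≤ r) : a * x ≤ r * |x| :=
  calc a * x ≤ |a| * |x| := abs_mul a x ▸ le_abs_self _
    _ ≤ r * |x| := mul_le_mul_of_nonneg_right h (abs_nonneg x)

theorem neg_mul_le_mul_max_zero_neg {a w : R} (x : R) (ha : 0 ≤ a) (haw : a ≤ w) :
    -(a * x) ≤ w * max 0 (-x) :=
  calc -(a * x) = a * -x := (mul_neg a x).symm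
    _ ≤ a * max 0 (-x) := mul_le_mul_of_nonneg_left (le_max_right _ _) ha
    _ ≤ w * max 0 (-x) := mul_le_mul_of_nonneg_right haw (le_max_left _ _)

variable [Fintype ι]

theorem dotProduct_le_sum_mul_abs_s1 {a r : ι → R} (x : ι → R) (h : ∀ j, |a j| ≤ r j) :
    a ⬝ᵥ x ≤ ∑ j, r j * |x j| :=
  Finset.sum_le_sum fun j _ => mul_le_mul_abs_of_abs_le (x j) (h j)

theorem neg_dotProduct_le_sum_mul_max_zero_neg {a w : ι → R} (x : ι → R) (ha : ∀ j, 0 ≤ a j)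
    (haw : ∀ j, a j ≤ w j) : -(a ⬝ᵥ x) ≤ ∑ j, w j * max 0 (-x j) := by
  rw [dotProduct, ← Finset.sum_neg_distrib]
  exact Finset.sum_le_sum fun j _ => neg_mul_le_mul_max_zero_neg (x j) (ha j) (haw j)

end PenaltyBounds

theorem sqp_merit_directional_derivative_bound_general
    {n p q : ℕ} (d : Fin n → ℝ) (B : Matrix (Fin n) (Fin n) ℝ)
    (c : Fin n → ℝ) (Ah : Matrix (Fin p) (Fin n) ℝ) (Ag : Matrix (Fin q) (Fin n) ℝ)
    (h : Fin p → ℝ) (g : Fin q → ℝ) (lam : Fin p → ℝ) (mu : Fin q → ℝ)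
    (ρ : Fin p → ℝ) (v : Fin q → ℝ)
    (hstat : B.mulVec d + c + Ah.transpose.mulVec lam - Ag.transpose.mulVec mu = 0)
    (hfeas : Ah.mulVec d + h = 0)
    (hdual : ∀ j, mu j ≥ 0)
    (hcomp : mu ⬝ᵥ (Ag.mulVec d + g) = 0)
    (hB : B.PosDef)
    (hρ : ∀ j, ρ j ≥ |lam j|) (hv : ∀ j, v j ≥ mu j) :
    (c ⬝ᵥ d - (∑ j, ρ j * |h j|) - (∑ j, v j * max 0 (-(g j))) ≤ -(d ⬝ᵥ B.mulVec d)) ∧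
      (d ≠ 0 → c ⬝ᵥ d - (∑ j, ρ j * |h j|) - (∑ j, v j * max 0 (-(g j))) < 0) := by
  have hbound : c ⬝ᵥ d - (∑ j, ρ j * |h j|) - (∑ j, v j * max 0 (-(g j))) ≤
      -(d ⬝ᵥ B.mulVec d) := by
    linarith [dotProduct_eq_of_qp_kkt d c B Ah Ag h lam g mu hstat hfeas hcomp,
      dotProduct_le_sum_mul_abs_s1 h hρ, neg_dotProduct_le_sum_mul_max_zero_neg g hdual hv]
  refine ⟨hbound, fun hd => ?_⟩
  have hpos : 0 < d ⬝ᵥ B.mulVec d := by simpa using hB.dotProduct_mulVec_pos hd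
  linarith

/-- Under the KKT conditions of the SQP QP subproblem, positive definiteness of `B`,
and penalty dominance (`ρ j ≥ |λ j|`, `v j ≥ μ j`), the directional derivative of the
ℓ1 merit function along `d` is at most `-(d ⬝ᵥ B.mulVec d)`; in particular it is
strictly negative whenever `d ≠ 0`. -/
theorem sqp_merit_directional_derivative_bound
    {n p q : ℕ} (d : Fin n → ℝ) (B : Matrix (Fin n) (Fin n) ℝ)
    (c : Fin n → ℝ) (Ah : Matrix (Fin p) (Fin n) ℝ) (Ag : Matrix (Fin q) (Fin n) ℝ)
    (h : Fin p → ℝ) (g : Fin q → ℝ) (lam : Fin p → ℝ) (mu : Fin q → ℝ)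
    (ρ : Fin p → ℝ) (v : Fin q → ℝ)
    (hstat : B.mulVec d + c + Ah.transpose.mulVec lam - Ag.transpose.mulVec mu = 0)
    (hfeas : Ah.mulVec d + h = 0)
    (gfeas : ∀ j, (Ag.mulVec d + g) j ≥ 0)
    (hdual : ∀ j, mu j ≥ 0)
    (hcomp : mu ⬝ᵥ (Ag.mulVec d + g) = 0)
    (hB : B.PosDef)
    (hρ : ∀ j, ρ j ≥ |lam j|) (hv : ∀ j, v j ≥ mu j) :
    (c ⬝ᵥ d - (∑ j, ρ j * |h j|) - (∑ j, v j * max 0 (-(g j))) ≤ -(d ⬝ᵥ B.mulVec d)) ∧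
      (d ≠ 0 → c ⬝ᵥ d - (∑ j, ρ j * |h j|) - (∑ j, v j * max 0 (-(g j))) < 0) :=
  sqp_merit_directional_derivative_bound_general d B c Ah Ag h g lam mu ρ v hstat hfeas hdual hcomp
    hB hρ hv
end

section
/- Suppose the KKT conditions of the SQP quadratic-programming subproblem hold (no further relation between the penalty vectors and the multipliers is assumed). Then c ⬝ᵥ d − ∑_j ρ_j·|h_j| − ∑_j v_j·max(0, −g_j) ≤ −(d ⬝ᵥ B.mulVec d) + ∑_j |h_j|·(|λ_j| − ρ_j) + ∑_j max(0, −g_j)·(μ_j − v_j). -/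
/-!
Pairing the stationarity equation with `d` and eliminating `Ah *ᵥ d` and `mu ⬝ᵥ Ag *ᵥ d` through
linearized feasibility and complementarity gives the exact identity
`c ⬝ᵥ d = -(d ⬝ᵥ B *ᵥ d) + lam ⬝ᵥ h - mu ⬝ᵥ g`.
The bound then follows termwise from `lam j * h j ≤ |h j| * |lam j|` and, as `mu j ≥ 0`,
`-(mu j * g j) ≤ max 0 (-g j) * mu j`.
-/

open Matrix

section KKT

variable {α m k l : Type*} [CommRing α] [Fintype m] [Fintype k] [Fintype l]

theorem dotProduct_eq_of_kkt {d c : m → α} {B : Matrix m m α} {Ah : Matrix k m α}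
    {Ag : Matrix l m α} {h lam : k → α} {g mu : l → α}
    (hstat : B *ᵥ d + c + Ahᵀ *ᵥ lam - Agᵀ *ᵥ mu = 0) (hfeas : Ah *ᵥ d + h = 0)
    (hcomp : mu ⬝ᵥ (Ag *ᵥ d + g) = 0) :
    c ⬝ᵥ d = -(d ⬝ᵥ B *ᵥ d) + lam ⬝ᵥ h - mu ⬝ᵥ g := by
  have hpair := congrArg (d ⬝ᵥ ·) hstat
  simp only [dotProduct_add, dotProduct_sub, dotProduct_zero, dotProduct_transpose_mulVec,
    eq_neg_of_add_eq_zero_left hfeas, dotProduct_neg] at hpair hcomp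
  rw [dotProduct_comm c d]
  linear_combination hpair + hcomp

end KKT

section Bounds

variable {α ι : Type*} [Fintype ι] [CommRing α] [LinearOrder α] [IsStrictOrderedRing α]

theorem dotProduct_le_sum_abs_mul_abs (x y : ι → α) : x ⬝ᵥ y ≤ ∑ j, |y j| * |x j| :=
  Finset.sum_le_sum fun j _ => by
    rw [← abs_mul, mul_comm]
    exact le_abs_self _

theorem neg_dotProduct_le_sum_max_neg_mul {mu : ι → α} (hmu : ∀ j, 0 ≤ mu j) (g : ι → α) :
    -(mu ⬝ᵥ g) ≤ ∑ j, max 0 (-g j) * mu j := by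
  rw [dotProduct, ← Finset.sum_neg_distrib]
  refine Finset.sum_le_sum fun j _ => ?_
  rw [← mul_neg, mul_comm]
  exact mul_le_mul_of_nonneg_right (le_max_right _ _) (hmu j)

end Bounds

theorem sqp_merit_directional_derivative_general_bound_general
    {n p q : ℕ} (d : Fin n → ℝ) (B : Matrix (Fin n) (Fin n) ℝ)
    (c : Fin n → ℝ) (Ah : Matrix (Fin p) (Fin n) ℝ) (Ag : Matrix (Fin q) (Fin n) ℝ)
    (h : Fin p → ℝ) (g : Fin q → ℝ) (lam : Fin p → ℝ) (mu : Fin q → ℝ)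
    (ρ : Fin p → ℝ) (v : Fin q → ℝ)
    (hstat : B.mulVec d + c + Ah.transpose.mulVec lam - Ag.transpose.mulVec mu = 0)
    (hfeas : Ah.mulVec d + h = 0)
    (hdual : ∀ j, mu j ≥ 0)
    (hcomp : mu ⬝ᵥ (Ag.mulVec d + g) = 0) :
    c ⬝ᵥ d - (∑ j, ρ j * |h j|) - (∑ j, v j * max 0 (-(g j)))
      ≤ -(d ⬝ᵥ B.mulVec d) + (∑ j, |h j| * (|lam j| - ρ j))
        + (∑ j, max 0 (-(g j)) * (mu j - v j)) := by
  have hc := dotProduct_eq_of_kkt hstat hfeas hcomp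
  have hlam := dotProduct_le_sum_abs_mul_abs lam h
  have hmu := neg_dotProduct_le_sum_max_neg_mul hdual g
  simp only [mul_sub, Finset.sum_sub_distrib, mul_comm (ρ _), mul_comm (v _)]
  linarith

/-- Under only the KKT conditions of the SQP QP subproblem (no relation between the
penalty vectors and the multipliers), the directional derivative of the ℓ1 merit
function along `d` is bounded by
`-(d ⬝ᵥ B.mulVec d) + ∑ |h j|·(|λ j| - ρ j) + ∑ max(0, -g j)·(μ j - v j)`. -/
theorem sqp_merit_directional_derivative_general_bound
    {n p q : ℕ} (d : Fin n → ℝ) (B : Matrix (Fin n) (Fin n) ℝ)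
    (c : Fin n → ℝ) (Ah : Matrix (Fin p) (Fin n) ℝ) (Ag : Matrix (Fin q) (Fin n) ℝ)
    (h : Fin p → ℝ) (g : Fin q → ℝ) (lam : Fin p → ℝ) (mu : Fin q → ℝ)
    (ρ : Fin p → ℝ) (v : Fin q → ℝ)
    (hstat : B.mulVec d + c + Ah.transpose.mulVec lam - Ag.transpose.mulVec mu = 0)
    (hfeas : Ah.mulVec d + h = 0)
    (gfeas : ∀ j, (Ag.mulVec d + g) j ≥ 0)
    (hdual : ∀ j, mu j ≥ 0)
    (hcomp : mu ⬝ᵥ (Ag.mulVec d + g) = 0) :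
    c ⬝ᵥ d - (∑ j, ρ j * |h j|) - (∑ j, v j * max 0 (-(g j)))
      ≤ -(d ⬝ᵥ B.mulVec d) + (∑ j, |h j| * (|lam j| - ρ j))
        + (∑ j, max 0 (-(g j)) * (mu j - v j)) :=
  sqp_merit_directional_derivative_general_bound_general d B c Ah Ag h g lam mu ρ v hstat hfeas
    hdual hcomp
end

section
/- Let x, d : Fin n → ℝ, let f : (Fin n → ℝ) → ℝ, h : (Fin n → ℝ) → (Fin p → ℝ), g : (Fin n → ℝ) → (Fin q → ℝ), let c : Fin n → ℝ, let A_h : Matrix (Fin p) (Fin n) ℝ and A_g : Matrix (Fin q) (Fin n) ℝ, and let γ ≥ 0. Assume the Taylor bounds: for all α ∈ [0,1], f(x + α•d) ≤ f(x) + α·(c ⬝ᵥ d) + γ·α²·‖d‖², and for every j, |h_j(x + α•d) − h_j(x) − α·(A_h.mulVec d)_j| ≤ γ·α²·‖d‖² and |g_j(x + α•d) − g_j(x) − α·(A_g.mulVec d)_j| ≤ γ·α²·‖d‖², where ‖d‖² = ∑_i (d i)². Assume linearized feasibility A_h.mulVec d + h(x) = 0 and (A_g.mulVec d + g(x)) j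 ≥ 0 for all j, and that ρ_j ≥ 0 and v_j ≥ 0 for all j. Then for every α ∈ [0,1]: φ1(x + α•d) − φ1(x) ≤ α·(c ⬝ᵥ d − ∑_j ρ_j·|h_j(x)| − ∑_j v_j·max(0, −g_j(x))) + (1 + ∑_j ρ_j + ∑_j v_j)·γ·α²·‖d‖². -/
open Matrix

/-
Along `d` each constraint value is, up to its Taylor error, the convex combination
`(1 - α) • (value at x) + α • (linearized value)`. Linearized feasibility makes the second
term vanish (equalities) or harmless (inequalities), so by convexity each penalty term
shrinks by the factor `1 - α` up to its Taylor error; the objective contributes its own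
Taylor bound, and summing with the nonnegative weights gives the claim.
-/

section TaylorStep

variable {K : Type*} [Field K] [LinearOrder K] [IsStrictOrderedRing K] {a b l α E : K}

theorem abs_le_one_sub_mul_abs_add_of_add_eq_zero (hl : l + b = 0) (hα₁ : α ≤ 1)
    (hr : |a - b - α * l| ≤ E) :
    |a| ≤ (1 - α) * |b| + E :=
  calc |a| = |(1 - α) * b + (a - b - α * l)| := by congr 1; linear_combination α * hl
    _ ≤ |(1 - α) * b| + |a - b - α * l| := abs_add_le _ _
    _ ≤ (1 - α) * |b| + E := by
        rw [abs_mul, abs_of_nonneg (sub_nonneg.mpr hα₁)]; gcongr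

theorem max_zero_neg_le_one_sub_mul_add_of_add_nonneg (hl : 0 ≤ l + b)
    (hα₀ : 0 ≤ α) (hα₁ : α ≤ 1) (hr : |a - b - α * l| ≤ E) :
    max 0 (-a) ≤ (1 - α) * max 0 (-b) + E := by
  have hα : 0 ≤ 1 - α := sub_nonneg.mpr hα₁
  refine max_le (add_nonneg (mul_nonneg hα (le_max_left _ _)) ((abs_nonneg _).trans hr)) ?_
  calc -a = (1 - α) * -b - α * (l + b) - (a - b - α * l) := by ring
    _ ≤ (1 - α) * max 0 (-b) + E := by
      have hb := mul_le_mul_of_nonneg_left (le_max_right 0 (-b)) hα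
      linarith [mul_nonneg hα₀ hl, neg_abs_le (a - b - α * l)]

end TaylorStep

theorem Finset.sum_mul_le_one_sub_mul_sum_add_sum_mul {ι K : Type*} [Field K] [LinearOrder K]
    [IsStrictOrderedRing K] (s : Finset ι) {w u t : ι → K} {α E : K}
    (hw : ∀ j ∈ s, 0 ≤ w j) (hut : ∀ j ∈ s, u j ≤ (1 - α) * t j + E) :
    ∑ j ∈ s, w j * u j ≤ (1 - α) * ∑ j ∈ s, w j * t j + (∑ j ∈ s, w j) * E := by
  rw [Finset.mul_sum, Finset.sum_mul, ← Finset.sum_add_distrib]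
  refine Finset.sum_le_sum fun j hj => ?_
  calc w j * u j ≤ w j * ((1 - α) * t j + E) := mul_le_mul_of_nonneg_left (hut j hj) (hw j hj)
    _ = (1 - α) * (w j * t j) + w j * E := by ring

theorem merit_function_taylor_decrease_general
    {n p q : ℕ} (x d : Fin n → ℝ)
    (f : (Fin n → ℝ) → ℝ) (h : (Fin n → ℝ) → Fin p → ℝ) (g : (Fin n → ℝ) → Fin q → ℝ)
    (c : Fin n → ℝ) (Ah : Matrix (Fin p) (Fin n) ℝ) (Ag : Matrix (Fin q) (Fin n) ℝ)
    (ρ : Fin p → ℝ) (v : Fin q → ℝ) (γ : ℝ)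
    (hf : ∀ α ∈ Set.Icc (0:ℝ) 1,
      f (x + α • d) ≤ f x + α * (c ⬝ᵥ d) + γ * α ^ 2 * (∑ i, (d i) ^ 2))
    (hh : ∀ α ∈ Set.Icc (0:ℝ) 1, ∀ j,
      |h (x + α • d) j - h x j - α * (Ah.mulVec d) j| ≤ γ * α ^ 2 * (∑ i, (d i) ^ 2))
    (hg : ∀ α ∈ Set.Icc (0:ℝ) 1, ∀ j,
      |g (x + α • d) j - g x j - α * (Ag.mulVec d) j| ≤ γ * α ^ 2 * (∑ i, (d i) ^ 2))
    (hfeas : Ah.mulVec d + h x = 0)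
    (gfeas : ∀ j, (Ag.mulVec d + g x) j ≥ 0)
    (hρ : ∀ j, 0 ≤ ρ j) (hv : ∀ j, 0 ≤ v j) :
    ∀ α ∈ Set.Icc (0:ℝ) 1,
      (f (x + α • d) + (∑ j, ρ j * |h (x + α • d) j|)
          + (∑ j, v j * max 0 (-(g (x + α • d) j))))
        - (f x + (∑ j, ρ j * |h x j|) + (∑ j, v j * max 0 (-(g x j))))
      ≤ α * (c ⬝ᵥ d - (∑ j, ρ j * |h x j|) - (∑ j, v j * max 0 (-(g x j))))
        + (1 + (∑ j, ρ j) + (∑ j, v j)) * γ * α ^ 2 * (∑ i, (d i) ^ 2) := by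
  intro α hα
  have hsum_h := Finset.univ.sum_mul_le_one_sub_mul_sum_add_sum_mul (fun j _ => hρ j)
    fun j _ => abs_le_one_sub_mul_abs_add_of_add_eq_zero (congrFun hfeas j) hα.2 (hh α hα j)
  have hsum_g := Finset.univ.sum_mul_le_one_sub_mul_sum_add_sum_mul (fun j _ => hv j)
    fun j _ => max_zero_neg_le_one_sub_mul_add_of_add_nonneg (gfeas j)
      hα.1 hα.2 (hg α hα j)
  linarith [hf α hα]

/-- Under Taylor-type bounds on the objective and constraint functions along the
direction `d`, linearized feasibility, and nonnegative penalties, the ℓ1 merit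
function decreases along `d` up to a quadratic error term. -/
theorem merit_function_taylor_decrease
    {n p q : ℕ} (x d : Fin n → ℝ)
    (f : (Fin n → ℝ) → ℝ) (h : (Fin n → ℝ) → Fin p → ℝ) (g : (Fin n → ℝ) → Fin q → ℝ)
    (c : Fin n → ℝ) (Ah : Matrix (Fin p) (Fin n) ℝ) (Ag : Matrix (Fin q) (Fin n) ℝ)
    (ρ : Fin p → ℝ) (v : Fin q → ℝ) (γ : ℝ) (hγ : 0 ≤ γ)
    (hf : ∀ α ∈ Set.Icc (0:ℝ) 1,
      f (x + α • d) ≤ f x + α * (c ⬝ᵥ d) + γ * α ^ 2 * (∑ i, (d i) ^ 2))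
    (hh : ∀ α ∈ Set.Icc (0:ℝ) 1, ∀ j,
      |h (x + α • d) j - h x j - α * (Ah.mulVec d) j| ≤ γ * α ^ 2 * (∑ i, (d i) ^ 2))
    (hg : ∀ α ∈ Set.Icc (0:ℝ) 1, ∀ j,
      |g (x + α • d) j - g x j - α * (Ag.mulVec d) j| ≤ γ * α ^ 2 * (∑ i, (d i) ^ 2))
    (hfeas : Ah.mulVec d + h x = 0)
    (gfeas : ∀ j, (Ag.mulVec d + g x) j ≥ 0)
    (hρ : ∀ j, 0 ≤ ρ j) (hv : ∀ j, 0 ≤ v j) :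
    ∀ α ∈ Set.Icc (0:ℝ) 1,
      (f (x + α • d) + (∑ j, ρ j * |h (x + α • d) j|)
          + (∑ j, v j * max 0 (-(g (x + α • d) j))))
        - (f x + (∑ j, ρ j * |h x j|) + (∑ j, v j * max 0 (-(g x j))))
      ≤ α * (c ⬝ᵥ d - (∑ j, ρ j * |h x j|) - (∑ j, v j * max 0 (-(g x j))))
        + (1 + (∑ j, ρ j) + (∑ j, v j)) * γ * α ^ 2 * (∑ i, (d i) ^ 2) :=
  merit_function_taylor_decrease_general x d f h g c Ah Ag ρ v γ hf hh hg hfeas gfeas hρ hv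
end

section
/- Let F : ℝ → ℝ and, for j in finite index sets Fin p and Fin q, let H_j : ℝ → ℝ and G_j : ℝ → ℝ. Assume F has derivative c₀ at 0, each H_j has derivative −H_j(0) at 0, each G_j has derivative u_j at 0 with u_j ≥ −G_j(0), and ρ_j ≥ 0, v_j ≥ 0 for all j. Define φ(α) = F(α) + ∑_j ρ_j·|H_j(α)| + ∑_j v_j·max(0, −G_j(α)). Then limsup of (φ(α) − φ(0))/α as α → 0 from the right (along the filter 𝓝[>] 0) is at most c₀ − ∑_j ρ_j·|H_j(0)| − ∑_j v_j·max(0, −G_j(0)). -/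
open Filter Set Topology NNReal

/-!
The difference quotient splits into that of `F`, which tends to `c₀`, and the weighted quotients
of the penalties `g ∘ h` with `g = |·|` or `g = max 0 (-·)`, both 1-Lipschitz. If `h' 0 = d`, then
`g (h α)` differs from `g (h 0 + α * d)` by `o(α)`, and linearized feasibility makes this linearized
step shrink the penalty by the factor `1 - α`: `|(1 - α) h 0| = (1 - α) |h 0|`, and
`max 0 (-(h 0 + α u)) ≤ (1 - α) max 0 (-h 0)` when `u ≥ -h 0`. Hence each penalty quotient is at
most `-g (h 0) + o(1)`.
-/

namespace Filter

/-- The lower bound is needed: without it `limsup f l` in `ℝ` can be a junk value. -/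
structure BoundedLimsupLE {ι : Type*} (l : Filter ι) (f : ι → ℝ) (b : ℝ) : Prop where
  isBoundedUnder_ge : IsBoundedUnder (· ≥ ·) l f
  exists_le_tendsto : ∃ U : ι → ℝ, f ≤ᶠ[l] U ∧ Tendsto U l (𝓝 b)

namespace BoundedLimsupLE

variable {ι : Type*} {l : Filter ι} {f g : ι → ℝ} {a b : ℝ}

lemma of_tendsto (hf : Tendsto f l (𝓝 b)) : BoundedLimsupLE l f b :=
  ⟨hf.isBoundedUnder_ge, f, EventuallyLE.refl _ _, hf⟩

lemma add (hf : BoundedLimsupLE l f a) (hg : BoundedLimsupLE l g b) :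
    BoundedLimsupLE l (fun x => f x + g x) (a + b) := by
  obtain ⟨U, hfU, hU⟩ := hf.exists_le_tendsto
  obtain ⟨V, hgV, hV⟩ := hg.exists_le_tendsto
  refine ⟨isBoundedUnder_ge_add hf.isBoundedUnder_ge hg.isBoundedUnder_ge, U + V, ?_, hU.add hV⟩
  filter_upwards [hfU, hgV] with x hfx hgx using add_le_add hfx hgx

lemma const_mul (hf : BoundedLimsupLE l f b) {c : ℝ} (hc : 0 ≤ c) :
    BoundedLimsupLE l (fun x => c * f x) (c * b) := by
  obtain ⟨m, hm⟩ := hf.isBoundedUnder_ge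
  obtain ⟨U, hfU, hU⟩ := hf.exists_le_tendsto
  exact ⟨⟨c * m, hm.mono fun x hx => mul_le_mul_of_nonneg_left hx hc⟩, fun x => c * U x,
    hfU.mono fun x hx => mul_le_mul_of_nonneg_left hx hc, hU.const_mul c⟩

lemma sum {κ : Type*} (s : Finset κ) {f : κ → ι → ℝ} {b : κ → ℝ}
    (h : ∀ k ∈ s, BoundedLimsupLE l (f k) (b k)) :
    BoundedLimsupLE l (fun x => ∑ k ∈ s, f k x) (∑ k ∈ s, b k) := by
  induction s using Finset.cons_induction with
  | empty => simpa using of_tendsto (l := l) tendsto_const_nhds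
  | cons k s hk ih =>
    rw [Finset.forall_mem_cons] at h
    simpa only [Finset.sum_cons] using h.1.add (ih h.2)

lemma limsup_le [l.NeBot] (hf : BoundedLimsupLE l f b) : limsup f l ≤ b := by
  obtain ⟨U, hfU, hU⟩ := hf.exists_le_tendsto
  calc limsup f l ≤ limsup U l :=
        limsup_le_limsup hfU hf.isBoundedUnder_ge.isCoboundedUnder_le hU.isBoundedUnder_le
    _ = b := hU.limsup_eq

end BoundedLimsupLE

end Filter

variable {g h : ℝ → ℝ} {K : ℝ≥0} {d α : ℝ}

lemma HasDerivAt.tendsto_sub_div_nhdsGT_zero (hh : HasDerivAt h d 0) :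
    Tendsto (fun α => (h α - h 0) / α) (𝓝[>] 0) (𝓝 d) := by
  simpa [div_eq_inv_mul] using hh.tendsto_slope_zero_right

namespace LipschitzWith

lemma neg_mul_abs_sub_div_le (hg : LipschitzWith K g) (hα : 0 < α) :
    -(K * |(h α - h 0) / α|) ≤ (g (h α) - g (h 0)) / α := by
  have hlip := hg.dist_le_mul (h 0) (h α)
  rw [Real.dist_eq, Real.dist_eq, abs_sub_comm (h 0)] at hlip
  rw [le_div_iff₀ hα, abs_div, abs_of_pos hα, mul_div_assoc', neg_mul, div_mul_cancel₀ _ hα.ne']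
  linarith [le_abs_self (g (h 0) - g (h α))]

lemma sub_div_le_of_step (hg : LipschitzWith K g) (hα : 0 < α)
    (hstep : g (h 0 + α * d) ≤ (1 - α) * g (h 0)) :
    (g (h α) - g (h 0)) / α ≤ -g (h 0) + K * |(h α - h 0) / α - d| := by
  have hlip := hg.dist_le_mul (h α) (h 0 + α * d)
  rw [Real.dist_eq, Real.dist_eq] at hlip
  have hrem : |(h α - h 0) / α - d| * α = |h α - (h 0 + α * d)| := by
    rw [show (h α - h 0) / α - d = (h α - (h 0 + α * d)) / α by field_simp; ring,
      abs_div, abs_of_pos hα, div_mul_cancel₀ _ hα.ne']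
  rw [div_le_iff₀ hα, add_mul, mul_assoc, hrem]
  linarith [le_abs_self (g (h α) - g (h 0 + α * d))]

theorem boundedLimsupLE_comp_sub_div (hg : LipschitzWith K g) (hh : HasDerivAt h d 0)
    (hstep : ∀ α ∈ Ioc (0 : ℝ) 1, g (h 0 + α * d) ≤ (1 - α) * g (h 0)) :
    BoundedLimsupLE (𝓝[>] 0) (fun α => (g (h α) - g (h 0)) / α) (-g (h 0)) := by
  have hslope := hh.tendsto_sub_div_nhdsGT_zero
  refine ⟨?_, fun α => -g (h 0) + K * |(h α - h 0) / α - d|, ?_, ?_⟩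
  · exact (hslope.abs.const_mul (K : ℝ)).neg.isBoundedUnder_ge.mono_ge <|
      eventually_mem_nhdsWithin.mono fun α hα => hg.neg_mul_abs_sub_div_le hα
  · filter_upwards [Ioc_mem_nhdsGT one_pos] with α hα
    exact hg.sub_div_le_of_step hα.1 (hstep α hα)
  · simpa using ((hslope.sub_const d).abs.const_mul (K : ℝ)).const_add (-g (h 0))

end LipschitzWith

lemma boundedLimsupLE_abs_sub_div (hh : HasDerivAt h (-h 0) 0) :
    BoundedLimsupLE (𝓝[>] 0) (fun α => (|h α| - |h 0|) / α) (-|h 0|) := by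
  refine lipschitzWith_one_norm.boundedLimsupLE_comp_sub_div hh fun α hα => le_of_eq ?_
  show |h 0 + α * -h 0| = (1 - α) * |h 0|
  rw [show h 0 + α * -h 0 = (1 - α) * h 0 by ring, abs_mul, abs_of_nonneg (by linarith [hα.2])]

lemma boundedLimsupLE_max_zero_neg_sub_div {u : ℝ} (hh : HasDerivAt h u 0) (hu : -h 0 ≤ u) :
    BoundedLimsupLE (𝓝[>] 0) (fun α => (max 0 (-h α) - max 0 (-h 0)) / α) (-max 0 (-h 0)) := by
  refine (LipschitzWith.id.neg.const_max 0).boundedLimsupLE_comp_sub_div hh fun α hα => ?_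
  have h1α : 0 ≤ 1 - α := by linarith [hα.2]
  refine max_le (mul_nonneg h1α (le_max_left _ _)) ?_
  calc -(h 0 + α * u) ≤ (1 - α) * -h 0 := by nlinarith [hα.1]
    _ ≤ (1 - α) * max 0 (-h 0) := mul_le_mul_of_nonneg_left (le_max_right _ _) h1α

/-- One-sided upper bound on the directional derivative of the ℓ1 merit function
along a direction satisfying the linearized constraints: the limsup of the right
difference quotient is at most `c₀ - ∑ ρ j·|H j 0| - ∑ v j·max(0, -G j 0)`. -/
theorem merit_limsup_difference_quotient_le
    {p q : ℕ} (F : ℝ → ℝ) (H : Fin p → ℝ → ℝ) (G : Fin q → ℝ → ℝ)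
    (c₀ : ℝ) (u : Fin q → ℝ) (ρ : Fin p → ℝ) (v : Fin q → ℝ)
    (hF : HasDerivAt F c₀ 0)
    (hH : ∀ j, HasDerivAt (H j) (-(H j 0)) 0)
    (hG : ∀ j, HasDerivAt (G j) (u j) 0)
    (hu : ∀ j, u j ≥ -(G j 0))
    (hρ : ∀ j, 0 ≤ ρ j) (hv : ∀ j, 0 ≤ v j) :
    Filter.limsup
        (fun α : ℝ =>
          ((F α + (∑ j, ρ j * |H j α|) + (∑ j, v j * max 0 (-(G j α))))
              - (F 0 + (∑ j, ρ j * |H j 0|) + (∑ j, v j * max 0 (-(G j 0))))) / α)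
        (nhdsWithin 0 (Set.Ioi 0))
      ≤ c₀ - (∑ j, ρ j * |H j 0|) - (∑ j, v j * max 0 (-(G j 0))) := by
  have hφ := ((BoundedLimsupLE.of_tendsto hF.tendsto_sub_div_nhdsGT_zero).add
    (BoundedLimsupLE.sum Finset.univ fun j _ =>
      (boundedLimsupLE_abs_sub_div (hH j)).const_mul (hρ j))).add
    (BoundedLimsupLE.sum Finset.univ fun j _ =>
      (boundedLimsupLE_max_zero_neg_sub_div (hG j) (hu j)).const_mul (hv j))
  convert hφ.limsup_le using 2
  · ext α
    simp only [mul_div_assoc', ← Finset.sum_div, ← add_div, mul_sub, Finset.sum_sub_distrib]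
    ring
  · simp only [mul_neg, Finset.sum_neg_distrib]
    ring
end

section
/- Let F : ℝ → ℝ and, for j in a finite index set Fin p, let H_j : ℝ → ℝ. Assume F has derivative c₀ at 0, each H_j has derivative −H_j(0) at 0, and ρ_j ≥ 0 for all j. Define φ(α) = F(α) + ∑_j ρ_j·|H_j(α)|. Then the difference quotient (φ(α) − φ(0))/α tends, as α → 0 from the right (along 𝓝[>] 0), to c₀ − ∑_j ρ_j·|H_j(0)|; i.e. the one-sided directional derivative of the equality-constrained ℓ1 merit function along the SQP direction exists and equals c₀ − ∑_j ρ_j·|H_j(0)|. -/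
open Filter Set Asymptotics Topology

/- To first order `g y = (1 + (y - x) * c) * g x`, and for `y > x` near `x` the factor is
nonnegative, so taking absolute values (which is 1-Lipschitz) keeps the expansion. -/
theorem HasDerivWithinAt.abs_of_deriv_eq_mul {g : ℝ → ℝ} {x c : ℝ}
    (hg : HasDerivWithinAt g (c * g x) (Ioi x) x) :
    HasDerivWithinAt (fun y => |g y|) (c * |g x|) (Ioi x) x := by
  rw [hasDerivWithinAt_iff_isLittleO] at hg ⊢
  refine IsBigO.trans_isLittleO (IsBigO.of_bound 1 ?_) hg
  have hfactor : ∀ᶠ y in 𝓝[>] x, 0 ≤ 1 + (y - x) * c :=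
    have : Tendsto (fun y => 1 + (y - x) * c) (𝓝 x) (𝓝 1) :=
      Continuous.tendsto' (by fun_prop) x 1 (by simp)
    nhdsWithin_le_nhds (this.eventually (eventually_ge_nhds zero_lt_one))
  filter_upwards [hfactor] with y hy
  simp only [smul_eq_mul, Real.norm_eq_abs, one_mul]
  calc |(|g y| - |g x| - (y - x) * (c * |g x|))|
      = |(|g y| - |(1 + (y - x) * c) * g x|)| := by rw [abs_mul, abs_of_nonneg hy]; ring_nf
    _ ≤ |g y - (1 + (y - x) * c) * g x| := abs_abs_sub_abs_le_abs_sub _ _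
    _ = |g y - g x - (y - x) * (c * g x)| := by ring_nf

theorem merit_one_sided_directional_derivative_general
    {p : ℕ} (F : ℝ → ℝ) (H : Fin p → ℝ → ℝ)
    (c₀ : ℝ) (ρ : Fin p → ℝ)
    (hF : HasDerivAt F c₀ 0)
    (hH : ∀ j, HasDerivAt (H j) (-(H j 0)) 0) :
    Filter.Tendsto
      (fun α : ℝ =>
        ((F α + (∑ j, ρ j * |H j α|)) - (F 0 + (∑ j, ρ j * |H j 0|))) / α)
      (nhdsWithin 0 (Set.Ioi 0))
      (nhds (c₀ - (∑ j, ρ j * |H j 0|))) := by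
  have habs (j : Fin p) : HasDerivWithinAt (fun α => |H j α|) (-1 * |H j 0|) (Ioi 0) 0 :=
    ((hH j).hasDerivWithinAt.congr_deriv (neg_one_mul _).symm).abs_of_deriv_eq_mul
  have hmerit : HasDerivWithinAt (fun α => F α + ∑ j, ρ j * |H j α|)
      (c₀ + ∑ j, ρ j * (-1 * |H j 0|)) (Ioi 0) 0 :=
    hF.hasDerivWithinAt.add (.fun_sum fun j _ => (habs j).const_mul (ρ j))
  have hslope := (hasDerivWithinAt_iff_tendsto_slope' self_notMem_Ioi).1 hmerit
  simp only [neg_one_mul, mul_neg, Finset.sum_neg_distrib, ← sub_eq_add_neg] at hslope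
  simpa only [slope_fun_def_field, sub_zero] using hslope

/-- The one-sided directional derivative of the equality-constrained ℓ1 merit
function along the SQP direction exists and equals `c₀ - ∑ ρ j·|H j 0|`. -/
theorem merit_one_sided_directional_derivative
    {p : ℕ} (F : ℝ → ℝ) (H : Fin p → ℝ → ℝ)
    (c₀ : ℝ) (ρ : Fin p → ℝ)
    (hF : HasDerivAt F c₀ 0)
    (hH : ∀ j, HasDerivAt (H j) (-(H j 0)) 0)
    (hρ : ∀ j, 0 ≤ ρ j) :
    Filter.Tendsto
      (fun α : ℝ =>
        ((F α + (∑ j, ρ j * |H j α|)) - (F 0 + (∑ j, ρ j * |H j 0|))) / α)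
      (nhdsWithin 0 (Set.Ioi 0))
      (nhds (c₀ - (∑ j, ρ j * |H j 0|))) :=
  merit_one_sided_directional_derivative_general F H c₀ ρ hF hH
end

section
/- Let x, d : Fin n → ℝ with d ≠ 0, let f : (Fin n → ℝ) → ℝ, h : (Fin n → ℝ) → (Fin p → ℝ), g : (Fin n → ℝ) → (Fin q → ℝ). Suppose: (i) B is positive definite and the KKT conditions of the SQP QP subproblem hold with current constraint values h(x) and g(x); (ii) ρ_j ≥ |λ_j| and v_j ≥ μ_j for all j; (iii) along the line, the functions α ↦ f(x + α•d), α ↦ h_j(x + α•d), α ↦ g_j(x + α•d) have derivatives at 0 equal to c ⬝ᵥ d, (A_h.mulVec d)_j and (A_g.mulVec d)_j respectively. Then d is a strict descent direction for the ℓ1 merit function: there exists α₀ > 0 such that for all α ∈ (0, α₀), φ1(x + α•d) < φ1(x). -/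
open Matrix Set Filter Topology Asymptotics
open scoped NNReal

/-!
Both penalties are convex Lipschitz functions of a constraint value, and the linearised constraint
`h x + A_h d`, resp. `g x + A_g d`, is feasible. Hence, by convexity along the chord, the upper
right derivative of each penalty term along `x + α • d` at `α = 0` is at most minus its current
value. So the upper right derivative of `φ1` is at most
`c ⬝ᵥ d - ∑ ρ_j |h_j x| - ∑ v_j max(0, -g_j x)`, and the KKT conditions together with
`ρ ≥ |λ|`, `v ≥ μ ≥ 0` bound this by `-dᵀ B d < 0`.
-/

/-- The upper right Dini derivative of `φ` at `0` is at most `D`. -/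
def UpperRightDerivLE (φ : ℝ → ℝ) (D : ℝ) : Prop :=
  ∃ r : ℝ → ℝ, r =o[𝓝[>] 0] id ∧ ∀ᶠ t in 𝓝[>] 0, φ t ≤ φ 0 + t * D + r t

theorem HasDerivAt.isLittleO_nhdsGT {u : ℝ → ℝ} {u' : ℝ} (hu : HasDerivAt u u' 0) :
    (fun t => u t - u 0 - t * u') =o[𝓝[>] 0] id := by
  have := (hasDerivAt_iff_isLittleO.mp hu).mono (nhdsWithin_le_nhds (s := Ioi 0))
  simp only [sub_zero, smul_eq_mul] at this
  exact this

theorem HasDerivAt.upperRightDerivLE {φ : ℝ → ℝ} {D : ℝ} (hφ : HasDerivAt φ D 0) :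
    UpperRightDerivLE φ D :=
  ⟨_, hφ.isLittleO_nhdsGT, Eventually.of_forall fun t => by linarith⟩

namespace UpperRightDerivLE

variable {φ ψ : ℝ → ℝ} {D E : ℝ}

theorem mono (hφ : UpperRightDerivLE φ D) (hDE : D ≤ E) : UpperRightDerivLE φ E := by
  obtain ⟨r, hr, hle⟩ := hφ
  refine ⟨r, hr, ?_⟩
  filter_upwards [hle, self_mem_nhdsWithin] with t ht (ht0 : 0 < t)
  nlinarith

theorem add (hφ : UpperRightDerivLE φ D) (hψ : UpperRightDerivLE ψ E) :
    UpperRightDerivLE (fun t => φ t + ψ t) (D + E) := by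
  obtain ⟨r, hr, hφle⟩ := hφ
  obtain ⟨s, hs, hψle⟩ := hψ
  refine ⟨r + s, hr.add hs, ?_⟩
  filter_upwards [hφle, hψle] with t h1 h2
  simp only [Pi.add_apply]
  linarith

theorem const_mul (hφ : UpperRightDerivLE φ D) {a : ℝ} (ha : 0 ≤ a) :
    UpperRightDerivLE (fun t => a * φ t) (a * D) := by
  obtain ⟨r, hr, hle⟩ := hφ
  refine ⟨fun t => a * r t, hr.const_mul_left a, ?_⟩
  filter_upwards [hle] with t ht
  nlinarith [mul_le_mul_of_nonneg_left ht ha]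

theorem sum {ι : Type*} (s : Finset ι) {φ : ι → ℝ → ℝ} {D : ι → ℝ}
    (hφ : ∀ i ∈ s, UpperRightDerivLE (φ i) (D i)) :
    UpperRightDerivLE (fun t => ∑ i ∈ s, φ i t) (∑ i ∈ s, D i) := by
  classical
  induction s using Finset.induction_on with
  | empty => exact ⟨0, isLittleO_zero _ _, by simp⟩
  | insert i s hi ih =>
    simp only [Finset.sum_insert hi]
    exact (hφ i (by simp)).add (ih fun j hj => hφ j (by simp [hj]))

theorem exists_Ioo_lt (hφ : UpperRightDerivLE φ D) (hD : D < 0) :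
    ∃ α₀ > (0:ℝ), ∀ α ∈ Ioo (0:ℝ) α₀, φ α < φ 0 := by
  obtain ⟨r, hr, hle⟩ := hφ
  have hdecrease : ∀ᶠ t in 𝓝[>] 0, φ t < φ 0 := by
    filter_upwards [hle, hr.bound (c := -D / 2) (by linarith), self_mem_nhdsWithin]
      with t hφt hrt (ht : 0 < t)
    rw [id, Real.norm_eq_abs, Real.norm_eq_abs, abs_of_pos ht] at hrt
    nlinarith [le_abs_self (r t)]
  obtain ⟨α₀, hα₀, hsub⟩ := mem_nhdsGT_iff_exists_Ioo_subset.mp hdecrease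
  exact ⟨α₀, hα₀, fun α hα => hsub hα⟩

end UpperRightDerivLE

/-- On `[0, 1]` the linearisation `u 0 + t * u'` runs along the segment from `u 0` to `u 0 + u'`,
where convexity bounds `ψ` by the chord; the Lipschitz bound absorbs the `o(t)` error. -/
theorem ConvexOn.upperRightDerivLE_comp {ψ u : ℝ → ℝ} {K : ℝ≥0} {u' : ℝ}
    (hψ : ConvexOn ℝ univ ψ) (hψK : LipschitzWith K ψ) (hu : HasDerivAt u u' 0) :
    UpperRightDerivLE (fun t => ψ (u t)) (ψ (u 0 + u') - ψ (u 0)) := by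
  refine ⟨fun t => K * |u t - u 0 - t * u'|, ?_, ?_⟩
  · exact hu.isLittleO_nhdsGT.abs_left.const_mul_left _
  · filter_upwards [Ioo_mem_nhdsGT one_pos] with t ⟨ht0, ht1⟩
    have hchord : ψ (u 0 + t * u') ≤ (1 - t) * ψ (u 0) + t * ψ (u 0 + u') := by
      have := hψ.2 (mem_univ (u 0)) (mem_univ (u 0 + u')) (by linarith : 0 ≤ 1 - t) ht0.le
        (by ring)
      simp only [smul_eq_mul] at this
      rwa [show (1 - t) * u 0 + t * (u 0 + u') = u 0 + t * u' by ring] at this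
    have hlip : ψ (u t) ≤ ψ (u 0 + t * u') + K * |u t - u 0 - t * u'| := by
      have := hψK.dist_le_mul (u t) (u 0 + t * u')
      rw [Real.dist_eq, Real.dist_eq, sub_add_eq_sub_sub] at this
      linarith [le_abs_self (ψ (u t) - ψ (u 0 + t * u'))]
    linarith

theorem upperRightDerivLE_abs_comp {u : ℝ → ℝ} {u' : ℝ} (hu : HasDerivAt u u' 0)
    (hlin : u 0 + u' = 0) : UpperRightDerivLE (fun t => |u t|) (-|u 0|) := by
  simpa [hlin] using (convexOn_norm convex_univ).upperRightDerivLE_comp lipschitzWith_one_norm hu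

theorem upperRightDerivLE_max_zero_neg_comp {u : ℝ → ℝ} {u' : ℝ} (hu : HasDerivAt u u' 0)
    (hlin : 0 ≤ u 0 + u') : UpperRightDerivLE (fun t => max 0 (-u t)) (-max 0 (-u 0)) := by
  refine (ConvexOn.upperRightDerivLE_comp (ψ := fun y => max 0 (-y))
    ((convexOn_const 0 convex_univ).sup (concaveOn_id convex_univ).neg)
    (LipschitzWith.id.neg.const_max 0) hu).mono ?_
  rw [max_eq_left (neg_nonpos.mpr hlin), zero_sub]

theorem kkt_dotProduct_eq {m p q : Type*} [Fintype m] [Fintype p] [Fintype q]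
    {B : Matrix m m ℝ} {c d : m → ℝ} {Ah : Matrix p m ℝ} {Ag : Matrix q m ℝ}
    {lam hx : p → ℝ} {mu gx : q → ℝ}
    (hstat : B *ᵥ d + c + Ahᵀ *ᵥ lam - Agᵀ *ᵥ mu = 0) (hfeas : Ah *ᵥ d + hx = 0)
    (hcomp : mu ⬝ᵥ (Ag *ᵥ d + gx) = 0) :
    c ⬝ᵥ d = -(d ⬝ᵥ B *ᵥ d) + lam ⬝ᵥ hx - mu ⬝ᵥ gx := by
  have hAh : Ah *ᵥ d = -hx := eq_neg_of_add_eq_zero_left hfeas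
  have h1 := congrArg (d ⬝ᵥ ·) hstat
  simp only [dotProduct_add, dotProduct_sub, dotProduct_zero, mulVec_transpose] at h1
  rw [dotProduct_add] at hcomp
  rw [dotProduct_comm d (lam ᵥ* Ah), dotProduct_comm d (mu ᵥ* Ag), ← dotProduct_mulVec,
    ← dotProduct_mulVec, hAh, dotProduct_neg, dotProduct_comm d c] at h1
  linarith

theorem kkt_merit_rate_le {m p q : Type*} [Fintype m] [Fintype p] [Fintype q]
    {B : Matrix m m ℝ} {c d : m → ℝ} {Ah : Matrix p m ℝ} {Ag : Matrix q m ℝ}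
    {lam ρ hx : p → ℝ} {mu v gx : q → ℝ}
    (hstat : B *ᵥ d + c + Ahᵀ *ᵥ lam - Agᵀ *ᵥ mu = 0) (hfeas : Ah *ᵥ d + hx = 0)
    (hcomp : mu ⬝ᵥ (Ag *ᵥ d + gx) = 0) (hdual : ∀ j, 0 ≤ mu j)
    (hρ : ∀ j, |lam j| ≤ ρ j) (hv : ∀ j, mu j ≤ v j) :
    c ⬝ᵥ d + ∑ j, ρ j * -|hx j| + ∑ j, v j * -max 0 (-gx j) ≤ -(d ⬝ᵥ B *ᵥ d) := by
  have hlam : lam ⬝ᵥ hx ≤ ∑ j, ρ j * |hx j| := Finset.sum_le_sum fun j _ =>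
    calc lam j * hx j ≤ |lam j| * |hx j| := by rw [← abs_mul]; exact le_abs_self _
      _ ≤ ρ j * |hx j| := mul_le_mul_of_nonneg_right (hρ j) (abs_nonneg _)
  have hmu : -(mu ⬝ᵥ gx) ≤ ∑ j, v j * max 0 (-gx j) := by
    rw [dotProduct, ← Finset.sum_neg_distrib]
    refine Finset.sum_le_sum fun j _ => ?_
    calc -(mu j * gx j) = mu j * -gx j := by ring
      _ ≤ mu j * max 0 (-gx j) := mul_le_mul_of_nonneg_left (le_max_right _ _) (hdual j)
      _ ≤ v j * max 0 (-gx j) := mul_le_mul_of_nonneg_right (hv j) (le_max_left _ _)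
  simp only [mul_neg, Finset.sum_neg_distrib]
  linarith [kkt_dotProduct_eq hstat hfeas hcomp]

/-- If the KKT conditions of the SQP QP subproblem hold at `x` with `B` positive
definite, the penalties dominate the multipliers, and the objective/constraint
functions are differentiable along the line `α ↦ x + α • d` with the stated
derivatives, then `d ≠ 0` is a strict descent direction for the ℓ1 merit function. -/
theorem sqp_direction_is_descent_direction
    {n p q : ℕ} (x d : Fin n → ℝ) (hd : d ≠ 0)
    (f : (Fin n → ℝ) → ℝ) (h : (Fin n → ℝ) → Fin p → ℝ) (g : (Fin n → ℝ) → Fin q → ℝ)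
    (B : Matrix (Fin n) (Fin n) ℝ) (c : Fin n → ℝ)
    (Ah : Matrix (Fin p) (Fin n) ℝ) (Ag : Matrix (Fin q) (Fin n) ℝ)
    (lam : Fin p → ℝ) (mu : Fin q → ℝ) (ρ : Fin p → ℝ) (v : Fin q → ℝ)
    (hB : B.PosDef)
    (hstat : B.mulVec d + c + Ah.transpose.mulVec lam - Ag.transpose.mulVec mu = 0)
    (hfeas : Ah.mulVec d + h x = 0)
    (gfeas : ∀ j, (Ag.mulVec d + g x) j ≥ 0)
    (hdual : ∀ j, mu j ≥ 0)
    (hcomp : mu ⬝ᵥ (Ag.mulVec d + g x) = 0)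
    (hρ : ∀ j, ρ j ≥ |lam j|) (hv : ∀ j, v j ≥ mu j)
    (hf : HasDerivAt (fun α : ℝ => f (x + α • d)) (c ⬝ᵥ d) 0)
    (hh : ∀ j, HasDerivAt (fun α : ℝ => h (x + α • d) j) (Ah.mulVec d j) 0)
    (hg : ∀ j, HasDerivAt (fun α : ℝ => g (x + α • d) j) (Ag.mulVec d j) 0) :
    ∃ α₀ > (0:ℝ), ∀ α ∈ Set.Ioo (0:ℝ) α₀,
      f (x + α • d) + (∑ j, ρ j * |h (x + α • d) j|)
          + (∑ j, v j * max 0 (-(g (x + α • d) j)))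
        < f x + (∑ j, ρ j * |h x j|) + (∑ j, v j * max 0 (-(g x j))) := by
  have hx : x + (0:ℝ) • d = x := by rw [zero_smul, add_zero]
  have hmerit : UpperRightDerivLE
      (fun α => f (x + α • d) + ∑ j, ρ j * |h (x + α • d) j|
        + ∑ j, v j * max 0 (-g (x + α • d) j))
      (c ⬝ᵥ d + ∑ j, ρ j * -|h x j| + ∑ j, v j * -max 0 (-g x j)) := by
    refine (hf.upperRightDerivLE.add (UpperRightDerivLE.sum _ fun j _ => ?_)).add
      (UpperRightDerivLE.sum _ fun j _ => ?_)
    · have hlin : h (x + (0:ℝ) • d) j + (Ah *ᵥ d) j = 0 := by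
        simpa [hx, add_comm] using congrFun hfeas j
      simpa [hx] using (upperRightDerivLE_abs_comp (hh j) hlin).const_mul
        ((abs_nonneg _).trans (hρ j))
    · have hlin : 0 ≤ g (x + (0:ℝ) • d) j + (Ag *ᵥ d) j := by
        simpa [hx, add_comm] using gfeas j
      simpa [hx] using (upperRightDerivLE_max_zero_neg_comp (hg j) hlin).const_mul
        ((hdual j).trans (hv j))
  have hBd : 0 < d ⬝ᵥ B *ᵥ d := by simpa using hB.dotProduct_mulVec_pos hd
  obtain ⟨α₀, hα₀, hdescent⟩ :=
    (hmerit.mono (kkt_merit_rate_le hstat hfeas hcomp hdual hρ hv)).exists_Ioo_lt (by linarith)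
  exact ⟨α₀, hα₀, fun α hα => by simpa [hx] using hdescent α hα⟩
end

section
/- Let δ > 0, let Q : Matrix (Fin n) (Fin n) ℝ be orthogonal (Q * Qᵀ = 1), and let σ : Fin n → ℝ. Define H = Q * Matrix.diagonal σ * Qᵀ and E = Q * Matrix.diagonal (fun i => max 0 (δ − σ i)) * Qᵀ. Then E is the minimum modification under the Frobenius norm: for every symmetric matrix E' : Matrix (Fin n) (Fin n) ℝ such that H + E' − δ • (1 : Matrix (Fin n) (Fin n) ℝ) is positive semidefinite, one has √(∑_i ∑_j (E i j)²) ≤ √(∑_i ∑_j (E' i j)²). -/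
open Matrix

/-! Conjugation by the orthogonal `Q` preserves the sum of squared entries, so both sides can be
computed in the eigenbasis of `H`. There `E` is `diagonal τ`, while `E'` becomes `F = Qᵀ E' Q`,
and positive semidefiniteness of `diagonal σ + F - δ • 1` gives `F i i ≥ δ - σ i` on the
diagonal, hence `F i i ^ 2 ≥ τ i ^ 2`; the off-diagonal entries of `F` only add to its norm. -/

namespace Matrix

variable {m n R : Type*} [Fintype m] [Fintype n]

theorem sum_sq_entries_eq_trace [CommSemiring R] (A : Matrix m n R) :
    ∑ i, ∑ j, A i j ^ 2 = (Aᵀ * A).trace := by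
  simp only [trace, diag, mul_apply, transpose_apply, sq]
  exact Finset.sum_comm

theorem sum_sq_entries_conj_eq [CommSemiring R] [DecidableEq n] {Q : Matrix m n R}
    (hQ : Qᵀ * Q = 1) (A : Matrix n n R) :
    ∑ i, ∑ j, (Q * A * Qᵀ) i j ^ 2 = ∑ i, ∑ j, A i j ^ 2 := by
  rw [sum_sq_entries_eq_trace, sum_sq_entries_eq_trace]
  have hconj : (Q * A * Qᵀ)ᵀ * (Q * A * Qᵀ) = Q * (Aᵀ * A) * Qᵀ := by
    simp only [transpose_mul, transpose_transpose, Matrix.mul_assoc]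
    rw [← Matrix.mul_assoc Qᵀ Q, hQ, Matrix.one_mul]
  rw [hconj, trace_mul_cycle, ← Matrix.mul_assoc, hQ, Matrix.one_mul]

theorem sum_sq_entries_diagonal [CommSemiring R] [DecidableEq n] (d : n → R) :
    ∑ i, ∑ j, diagonal d i j ^ 2 = ∑ i, d i ^ 2 := by
  refine Finset.sum_congr rfl fun i _ => ?_
  rw [Finset.sum_eq_single i (fun j _ hji => by simp [diagonal_apply_ne _ hji.symm])
    (by simp), diagonal_apply_eq]

theorem sum_sq_diag_le_sum_sq_entries [CommRing R] [LinearOrder R] [IsStrictOrderedRing R]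
    (A : Matrix n n R) : ∑ i, A i i ^ 2 ≤ ∑ i, ∑ j, A i j ^ 2 :=
  Finset.sum_le_sum fun i _ =>
    Finset.single_le_sum (fun j _ => sq_nonneg (A i j)) (Finset.mem_univ i)

end Matrix

theorem max_zero_sub_sq_le {δ s f : ℝ} (h : δ ≤ s + f) : max 0 (δ - s) ^ 2 ≤ f ^ 2 := by
  rw [← sq_abs f]
  exact pow_le_pow_left₀ (le_max_left _ _)
    (max_le (abs_nonneg f) (by linarith [le_abs_self f])) 2

theorem modified_hessian_min_frobenius_general
    {n : ℕ} (δ : ℝ) (Q : Matrix (Fin n) (Fin n) ℝ)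
    (hQ : Q * Q.transpose = 1) (σ : Fin n → ℝ)
    (E' : Matrix (Fin n) (Fin n) ℝ)
    (hpsd : (Q * Matrix.diagonal σ * Q.transpose + E'
        - δ • (1 : Matrix (Fin n) (Fin n) ℝ)).PosSemidef) :
    Real.sqrt (∑ i, ∑ j,
        ((Q * Matrix.diagonal (fun i => max 0 (δ - σ i)) * Q.transpose) i j) ^ 2)
      ≤ Real.sqrt (∑ i, ∑ j, (E' i j) ^ 2) := by
  have hQ' : Qᵀ * Q = 1 := mul_eq_one_comm.mp hQ
  have hF : (diagonal σ + Qᵀ * E' * Q - δ • 1).PosSemidef := by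
    convert hpsd.conjTranspose_mul_mul_same Q using 1
    simp only [conjTranspose_eq_transpose_of_trivial, Matrix.mul_add, Matrix.mul_sub,
      Matrix.add_mul, Matrix.sub_mul, Matrix.mul_assoc, Matrix.mul_smul, Matrix.smul_mul,
      Matrix.mul_one, hQ']
    simp only [← Matrix.mul_assoc, hQ', Matrix.one_mul]
  have hE' : ∑ i, ∑ j, (Qᵀ * E' * Q) i j ^ 2 = ∑ i, ∑ j, E' i j ^ 2 := by
    simpa using sum_sq_entries_conj_eq (Q := Qᵀ) (by rwa [transpose_transpose]) E'
  apply Real.sqrt_le_sqrt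
  rw [sum_sq_entries_conj_eq hQ', sum_sq_entries_diagonal, ← hE']
  calc ∑ i, max 0 (δ - σ i) ^ 2 ≤ ∑ i, (Qᵀ * E' * Q) i i ^ 2 :=
        Finset.sum_le_sum fun i _ => max_zero_sub_sq_le <| by
          have := hF.diag_nonneg (i := i)
          simp only [Matrix.sub_apply, Matrix.add_apply, diagonal_apply_eq, Matrix.smul_apply,
            one_apply_eq, smul_eq_mul, mul_one] at this
          linarith
    _ ≤ ∑ i, ∑ j, (Qᵀ * E' * Q) i j ^ 2 := sum_sq_diag_le_sum_sq_entries _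

/-- The eigenvalue-modification `E = Q diag(max 0 (δ - σ)) Qᵀ` is the minimum
modification under the Frobenius norm: any symmetric `E'` such that
`H + E' - δ·I` is positive semidefinite has Frobenius norm at least that of `E`. -/
theorem modified_hessian_min_frobenius
    {n : ℕ} (δ : ℝ) (hδ : 0 < δ) (Q : Matrix (Fin n) (Fin n) ℝ)
    (hQ : Q * Q.transpose = 1) (σ : Fin n → ℝ)
    (E' : Matrix (Fin n) (Fin n) ℝ) (hE'sym : E'.IsSymm)
    (hpsd : (Q * Matrix.diagonal σ * Q.transpose + E'
        - δ • (1 : Matrix (Fin n) (Fin n) ℝ)).PosSemidef) :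
    Real.sqrt (∑ i, ∑ j,
        ((Q * Matrix.diagonal (fun i => max 0 (δ - σ i)) * Q.transpose) i j) ^ 2)
      ≤ Real.sqrt (∑ i, ∑ j, (E' i j) ^ 2) :=
  modified_hessian_min_frobenius_general δ Q hQ σ E' hpsd
end
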